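/- For every ε ∈ (0,1) there exist constants σ_0 ≥ 2 and B ≥ 2, depending only on ε, with the following property. Let ρ = (ρ_n)_{n≥1} be any sequence of Beurling primes with ρ_1 > 1 + ε and Beurling integers (ν_n)_{n≥1}, and let σ ≥ σ_0 be such that (∑_{n≥2} ν_n^{−σ}) · (∑_{n≥1} ν_n^{−σ/4}) ≤ 1. Then for every x ≥ B there exists a real number y ∈ [x − x^{−σ/2}, x + x^{−σ/2}] such that log y does not lie in the ℚ-linear span of {log ρ_n}_{n≥1} and |y^j − ν_n/ν_m| > ν_n^{−3σ} ν_m^{−3σ} for all triples (j, n, m) ∈ ℕ³ with j, n, m ≥ 1. -/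

import Mathlib

open Set Filter MeasureTheory

noncomputable section

/-- A sequence of Beurling primes: strictly increasing, first term `> 1`,
tending to infinity, with logarithms linearly independent over `ℚ`. -/
def IsBeurlingPrimes (q : ℕ → ℝ) : Prop :=
  StrictMono q ∧ 1 < q 0 ∧ Tendsto q atTop atTop ∧
    LinearIndependent ℚ fun n => Real.log (q n)

/-- The set of Beurling integers: all finite products of the `q i` with
natural number exponents (including the empty product `1`). -/
def beurlingIntegers (q : ℕ → ℝ) : Set ℝ :=
  {x | ∃ e : ℕ →₀ ℕ, x = e.prod fun i k => q i ^ k}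

/-- `ν` is the strictly increasing enumeration of `S`, tending to infinity. -/
def IsEnumeration (ν : ℕ → ℝ) (S : Set ℝ) : Prop :=
  StrictMono ν ∧ Tendsto ν atTop atTop ∧ (∀ n, ν n ∈ S) ∧ ∀ x ∈ S, ∃ n, ν n = x

/-- Bohr's condition for the increasing enumeration `ν`:
`ν (n+1) - ν n ≥ c₁ * ν (n+1) ^ (-c₂)` for all `n`. -/
def BohrCondition (ν : ℕ → ℝ) : Prop :=
  ∃ c₁ > (0:ℝ), ∃ c₂ > (0:ℝ), ∀ n : ℕ, ν (n+1) - ν n ≥ c₁ * ν (n+1) ^ (-c₂)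

/-- The Beurling prime counting function `π_q(x) = #{n : q_n ≤ x}`. -/
def piQ (q : ℕ → ℝ) (x : ℝ) : ℕ := Nat.card {n : ℕ | q n ≤ x}

/-- The logarithmic integral `li x = ∫_1^x (1-1/u)/log u du`. -/
def li (x : ℝ) : ℝ := ∫ u in (1:ℝ)..x, (1 - u⁻¹) / Real.log u

/-- The abscissa of convergence `σ_c` of the Dirichlet series `∑ ν_n^{-s}`. -/
def sigmaC (ν : ℕ → ℝ) : ℝ := sInf {σ : ℝ | Summable fun n => ν n ^ (-σ)}

/-!
Put `δ = x ^ (-σ/2) ≤ 1/100`. For fixed `n, m`, the `y ≥ x - 1` with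
`|y ^ (j+1) - ν n / ν m| ≤ ν n ^ (-3σ) * ν m ^ (-3σ)` for some `j` form a set of measure at most
`4 ν n ^ (-3σ) ν m ^ (-3σ)`: `y ↦ y ^ (j+1)` expands distances by at least `(x-1) ^ j`, and the
geometric series over `j` sums to at most `2`. Such `y` exist only if `ν n ≥ x - 2`, and then
`ν n ^ (-2σ) ≤ x ^ (-σ)`; as `∑ ν n ^ (-σ) ≤ 2`, the whole exceptional set has measure at most
`16 x ^ (-σ) = 16 δ² < 2 δ`. The `y` with `log y` in the countable `ℚ`-span of the `log ρ i` are
countably many, so some `y ∈ [x - δ, x + δ]` avoids everything.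
-/
open Real

theorem Submodule.countable_span_range {R M ι : Type*} [Semiring R] [AddCommMonoid M] [Module R M]
    [Countable R] [Countable ι] (f : ι → M) : (span R (range f) : Set M).Countable := by
  rw [← Finsupp.range_linearCombination, LinearMap.coe_range]
  exact countable_range _

theorem countable_setOf_log_mem {C : Set ℝ} (hC : C.Countable) :
    {y : ℝ | 0 < y ∧ log y ∈ C}.Countable :=
  (hC.image exp).mono fun y hy => (⟨log y, hy.2, exp_log hy.1⟩ : y ∈ exp '' C)

theorem sub_mul_pow_le_pow_succ_sub_pow_succ {R : Type*} [CommRing R] [LinearOrder R]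
    [IsStrictOrderedRing R] {a b : R} (ha : 0 ≤ a) (hab : a ≤ b) (j : ℕ) :
    (b - a) * a ^ j ≤ b ^ (j + 1) - a ^ (j + 1) := by
  have : a ^ j ≤ b ^ j := pow_le_pow_left₀ ha hab j
  rw [pow_succ, pow_succ]
  nlinarith [pow_nonneg ha j]

theorem volume_setOf_abs_pow_succ_sub_le {a : ℝ} (ha : 0 < a) (j : ℕ) (r η : ℝ) :
    volume {y | a ≤ y ∧ |y ^ (j + 1) - r| ≤ η} ≤ ENNReal.ofReal (2 * η / a ^ j) := by
  refine (Real.volume_le_diam _).trans (Metric.ediam_le fun y hy z hz => ?_)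
  rw [edist_dist, Real.dist_eq]
  refine ENNReal.ofReal_le_ofReal ?_
  wlog hyz : y ≤ z generalizing y z
  · rw [abs_sub_comm]
    exact this z hz y hy (le_of_not_ge hyz)
  rw [abs_sub_comm, abs_of_nonneg (sub_nonneg.2 hyz), le_div_iff₀ (pow_pos ha j)]
  calc (z - y) * a ^ j ≤ (z - y) * y ^ j := by gcongr; linarith [hy.1]
    _ ≤ z ^ (j + 1) - y ^ (j + 1) := sub_mul_pow_le_pow_succ_sub_pow_succ (ha.le.trans hy.1) hyz j
    _ ≤ 2 * η := by linarith [abs_le.1 hy.2, abs_le.1 hz.2]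

def powCloseSet (a r η : ℝ) : Set ℝ := {y | a ≤ y ∧ ∃ j : ℕ, |y ^ (j + 1) - r| ≤ η}

theorem powCloseSet_mono {a r η η' : ℝ} (h : η ≤ η') : powCloseSet a r η ⊆ powCloseSet a r η' :=
  fun _ ⟨hy, j, hj⟩ => ⟨hy, j, hj.trans h⟩

theorem volume_powCloseSet_le {a : ℝ} (ha : 2 ≤ a) (r : ℝ) {η : ℝ} (hη : 0 ≤ η) :
    volume (powCloseSet a r η) ≤ ENNReal.ofReal (4 * η) := by
  have hq0 : 0 ≤ a⁻¹ := by positivity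
  have hq : a⁻¹ ≤ 2⁻¹ := inv_anti₀ two_pos ha
  have hgeom : Summable fun j : ℕ => 2 * η * a⁻¹ ^ j :=
    (summable_geometric_of_lt_one hq0 (by linarith)).mul_left _
  have hunion : powCloseSet a r η = ⋃ j : ℕ, {y | a ≤ y ∧ |y ^ (j + 1) - r| ≤ η} := by
    ext; simp [powCloseSet]
  calc volume (powCloseSet a r η)
      ≤ ∑' j : ℕ, volume {y | a ≤ y ∧ |y ^ (j + 1) - r| ≤ η} := hunion ▸ measure_iUnion_le _
    _ ≤ ∑' j : ℕ, ENNReal.ofReal (2 * η * a⁻¹ ^ j) := ENNReal.tsum_le_tsum fun j => by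
        simpa only [div_eq_mul_inv, inv_pow] using
          volume_setOf_abs_pow_succ_sub_le (by linarith) j r η
    _ = ENNReal.ofReal (2 * η * (1 - a⁻¹)⁻¹) := by
        rw [← ENNReal.ofReal_tsum_of_nonneg (fun j => by positivity) hgeom, tsum_mul_left,
          tsum_geometric_of_lt_one hq0 (by linarith)]
    _ ≤ ENNReal.ofReal (4 * η) := by
        refine ENNReal.ofReal_le_ofReal ?_
        have : (1 - a⁻¹)⁻¹ ≤ 2 := by
          rw [inv_le_comm₀ (by linarith) two_pos]
          linarith
        nlinarith

theorem rpow_neg_three_mul_le {t x σ : ℝ} (ht : 0 < t) (hx0 : 0 < x) (hx : x ≤ t ^ 2)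
    (hσ : 0 ≤ σ) : t ^ (-(3 * σ)) ≤ x ^ (-σ) * t ^ (-σ) := by
  rw [show -(3 * σ) = 2 * -σ + -σ by ring, rpow_add ht, rpow_mul ht.le, rpow_two]
  exact mul_le_mul_of_nonneg_right (rpow_le_rpow_of_nonpos hx0 hx (by linarith))
    (rpow_nonneg ht.le _)

theorem Summable.rpow_neg_of_le {ι : Type*} {ν : ι → ℝ} (hν : ∀ n, 1 ≤ ν n) {s t : ℝ}
    (hst : s ≤ t) (h : Summable fun n => ν n ^ (-s)) : Summable fun n => ν n ^ (-t) :=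
  h.of_nonneg_of_le (fun n => rpow_nonneg (zero_le_one.trans (hν n)) _)
    fun n => rpow_le_rpow_of_exponent_le (hν n) (by linarith)

theorem tsum_rpow_neg_le_two {ν : ℕ → ℝ} (hν0 : ν 0 = 1) (hν1 : ∀ n, 1 ≤ ν n) {σ : ℝ}
    (hσ : 0 ≤ σ) (hsum : Summable fun n => ν n ^ (-(σ / 4)))
    (hprod : (∑' n, ν (n + 1) ^ (-σ)) * (∑' n, ν n ^ (-(σ / 4))) ≤ 1) :
    ∑' n, ν n ^ (-σ) ≤ 2 := by
  have hpos : ∀ n (s : ℝ), 0 ≤ ν n ^ s := fun n _ => rpow_nonneg (zero_le_one.trans (hν1 n)) _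
  have hsum_ge : 1 ≤ ∑' n, ν n ^ (-(σ / 4)) := by
    simpa [hν0] using hsum.le_tsum 0 fun n _ => hpos n _
  have htail : ∑' n, ν (n + 1) ^ (-σ) ≤ 1 := by
    have h0 : 0 ≤ ∑' n, ν (n + 1) ^ (-σ) := tsum_nonneg fun n => hpos (n + 1) _
    nlinarith
  rw [(hsum.rpow_neg_of_le hν1 (by linarith)).tsum_eq_zero_add, hν0, one_rpow]
  linarith

theorem volume_powCloseSet_div_le {x σ a b : ℝ} (hx : 4 ≤ x) (hσ : 0 ≤ σ)
    (ha : 1 ≤ a) (hb : 1 ≤ b) :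
    volume (powCloseSet (x - 1) (a / b) (a ^ (-(3 * σ)) * b ^ (-(3 * σ)))) ≤
      ENNReal.ofReal (4 * (x ^ (-σ) * a ^ (-σ) * b ^ (-(3 * σ)))) := by
  have hb' : 0 ≤ b ^ (-(3 * σ)) := rpow_nonneg (by linarith) _
  by_cases hxa : x - 2 ≤ a
  · have hη : a ^ (-(3 * σ)) * b ^ (-(3 * σ)) ≤ x ^ (-σ) * a ^ (-σ) * b ^ (-(3 * σ)) :=
      mul_le_mul_of_nonneg_right
        (rpow_neg_three_mul_le (by linarith) (by linarith) (by nlinarith) hσ) hb'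
    have hη0 : 0 ≤ a ^ (-(3 * σ)) * b ^ (-(3 * σ)) :=
      mul_nonneg (rpow_nonneg (by linarith) _) hb'
    exact (measure_mono (powCloseSet_mono hη)).trans
      (volume_powCloseSet_le (by linarith) _ (hη0.trans hη))
  · -- a point of the set would give `a ≥ a / b ≥ y ^ (j + 1) - 1 ≥ x - 2`
    suffices h : powCloseSet (x - 1) (a / b) (a ^ (-(3 * σ)) * b ^ (-(3 * σ))) = ∅ by
      simp only [h, measure_empty, zero_le]
    refine eq_empty_of_forall_notMem fun y ⟨hy, j, hj⟩ => hxa ?_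
    have hab : a / b ≤ a := div_le_self (by linarith) hb
    have hη : a ^ (-(3 * σ)) * b ^ (-(3 * σ)) ≤ 1 :=
      mul_le_one₀ (rpow_le_one_of_one_le_of_nonpos ha (by linarith)) hb'
        (rpow_le_one_of_one_le_of_nonpos hb (by linarith))
    have hyj : y ≤ y ^ (j + 1) := le_self_pow₀ (by linarith) j.succ_ne_zero
    linarith [(abs_le.1 hj).2]

theorem volume_iUnion_powCloseSet_div_le {ν : ℕ → ℝ} (hν1 : ∀ n, 1 ≤ ν n)
    {σ : ℝ} (hσ : 0 ≤ σ) (hsum : Summable fun n => ν n ^ (-σ)) (htsum : ∑' n, ν n ^ (-σ) ≤ 2)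
    {x : ℝ} (hx : 4 ≤ x) :
    volume (⋃ (n : ℕ) (m : ℕ),
        powCloseSet (x - 1) (ν n / ν m) (ν n ^ (-(3 * σ)) * ν m ^ (-(3 * σ)))) ≤
      ENNReal.ofReal (16 * x ^ (-σ)) := by
  have hpos : ∀ n (s : ℝ), 0 ≤ ν n ^ s := fun n _ => rpow_nonneg (zero_le_one.trans (hν1 n)) _
  have hsum3 : Summable fun n => ν n ^ (-(3 * σ)) := hsum.rpow_neg_of_le hν1 (by linarith)
  have htsum3 : ∑' n, ν n ^ (-(3 * σ)) ≤ 2 :=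
    (hsum3.tsum_le_tsum (fun n => rpow_le_rpow_of_exponent_le (hν1 n) (by linarith)) hsum).trans
      htsum
  have hx0 : 0 ≤ 4 * x ^ (-σ) := by positivity
  calc _ ≤ ∑' (n : ℕ) (m : ℕ),
        volume (powCloseSet (x - 1) (ν n / ν m) (ν n ^ (-(3 * σ)) * ν m ^ (-(3 * σ)))) :=
        (measure_iUnion_le _).trans (ENNReal.tsum_le_tsum fun n => measure_iUnion_le _)
    _ ≤ ∑' (n : ℕ) (m : ℕ), ENNReal.ofReal (4 * x ^ (-σ)) * ENNReal.ofReal (ν n ^ (-σ)) *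
        ENNReal.ofReal (ν m ^ (-(3 * σ))) := by
      refine ENNReal.tsum_le_tsum fun n => ENNReal.tsum_le_tsum fun m => ?_
      rw [← ENNReal.ofReal_mul hx0, ← ENNReal.ofReal_mul (mul_nonneg hx0 (hpos n _))]
      convert volume_powCloseSet_div_le hx hσ (hν1 n) (hν1 m) using 2
      ring
    _ = ENNReal.ofReal (4 * x ^ (-σ)) * ENNReal.ofReal (∑' n, ν n ^ (-σ)) *
        ENNReal.ofReal (∑' n, ν n ^ (-(3 * σ))) := by
      rw [ENNReal.ofReal_tsum_of_nonneg (fun n => hpos n _) hsum,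
        ENNReal.ofReal_tsum_of_nonneg (fun n => hpos n _) hsum3]
      simp only [ENNReal.tsum_mul_left, ENNReal.tsum_mul_right]
    _ ≤ ENNReal.ofReal (4 * x ^ (-σ)) * ENNReal.ofReal 2 * ENNReal.ofReal 2 := by
      gcongr
    _ = ENNReal.ofReal (16 * x ^ (-σ)) := by
      rw [← ENNReal.ofReal_mul hx0, ← ENNReal.ofReal_mul (by positivity)]
      ring_nf

theorem exists_mem_Icc_log_notMem_and_abs_pow_succ_sub_div_gt {ν : ℕ → ℝ} (hν1 : ∀ n, 1 ≤ ν n)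
    {σ : ℝ} (hσ : 2 ≤ σ) (hsum : Summable fun n => ν n ^ (-σ)) (htsum : ∑' n, ν n ^ (-σ) ≤ 2)
    {C : Set ℝ} (hC : C.Countable) {x : ℝ} (hx : 100 ≤ x) :
    ∃ y ∈ Icc (x - x ^ (-(σ / 2))) (x + x ^ (-(σ / 2))), log y ∉ C ∧
      ∀ j n m : ℕ, |y ^ (j + 1) - ν n / ν m| > ν n ^ (-(3 * σ)) * ν m ^ (-(3 * σ)) := by
  set δ := x ^ (-(σ / 2))
  have hδ0 : 0 < δ := rpow_pos_of_pos (by linarith) _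
  have hδ : δ ≤ 1 / 100 := by
    calc δ ≤ x ^ (-1 : ℝ) := rpow_le_rpow_of_exponent_le (by linarith) (by linarith)
      _ ≤ 1 / 100 := by
        rw [rpow_neg_one, one_div]
        exact inv_anti₀ (by norm_num) hx
  have hδsq : x ^ (-σ) = δ * δ := by
    rw [← rpow_add (by linarith)]
    ring_nf
  set Bad := ⋃ (n : ℕ) (m : ℕ),
    powCloseSet (x - 1) (ν n / ν m) (ν n ^ (-(3 * σ)) * ν m ^ (-(3 * σ)))
  set E := {y : ℝ | 0 < y ∧ log y ∈ C}
  have hsmall : volume (Bad ∪ E) < volume (Icc (x - δ) (x + δ)) :=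
    calc volume (Bad ∪ E) ≤ volume Bad + volume E := measure_union_le _ _
      _ ≤ ENNReal.ofReal (16 * (δ * δ)) + 0 := by
        rw [← hδsq, (countable_setOf_log_mem hC).measure_zero]
        gcongr
        exact volume_iUnion_powCloseSet_div_le hν1 (by linarith) hsum htsum
          (by linarith)
      _ < ENNReal.ofReal (2 * δ) := by
        rw [add_zero, ENNReal.ofReal_lt_ofReal_iff (by positivity)]
        nlinarith
      _ = volume (Icc (x - δ) (x + δ)) := by
        rw [Real.volume_Icc]
        ring_nf
  obtain ⟨y, hyI, hy⟩ : (Icc (x - δ) (x + δ) \ (Bad ∪ E)).Nonempty :=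
    nonempty_of_measure_ne_zero
      ((tsub_pos_of_lt hsmall).trans_le le_measure_sdiff).ne'
  have hy1 : x - 1 ≤ y := by linarith [hyI.1]
  refine ⟨y, hyI, fun hlog => hy (Or.inr ⟨by linarith, hlog⟩), fun j n m => not_le.1 fun hle => ?_⟩
  exact hy (Or.inl (mem_iUnion₂.2 ⟨n, m, hy1, j, hle⟩))

theorem IsBeurlingPrimes.one_lt {q : ℕ → ℝ} (hq : IsBeurlingPrimes q) (i : ℕ) : 1 < q i :=
  hq.2.1.trans_le (hq.1.monotone i.zero_le)

theorem isLeast_one_beurlingIntegers {q : ℕ → ℝ} (hq : ∀ i, 1 ≤ q i) :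
    IsLeast (beurlingIntegers q) 1 := by
  refine ⟨⟨0, by simp⟩, ?_⟩
  rintro _ ⟨e, rfl⟩
  exact Finset.one_le_prod fun i _ => one_le_pow₀ (hq i)

theorem IsEnumeration.apply_zero_eq {ν : ℕ → ℝ} {S : Set ℝ} {a : ℝ} (hν : IsEnumeration ν S)
    (ha : IsLeast S a) : ν 0 = a := by
  obtain ⟨n, rfl⟩ := hν.2.2.2 a ha.1
  exact le_antisymm (hν.1.monotone n.zero_le) (ha.2 (hν.2.2.1 0))

theorem exists_good_prime_in_interval_general (ε : ℝ) :
    ∃ σ₀ : ℝ, 2 ≤ σ₀ ∧ ∃ B : ℝ, 2 ≤ B ∧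
      ∀ ρ ν : ℕ → ℝ, IsBeurlingPrimes ρ → 1 + ε < ρ 0 →
        IsEnumeration ν (beurlingIntegers ρ) →
        ∀ σ : ℝ, σ₀ ≤ σ → (Summable fun n => ν n ^ (-(σ/4))) →
          (∑' n : ℕ, ν (n+1) ^ (-σ)) * (∑' n : ℕ, ν n ^ (-(σ/4))) ≤ 1 →
          ∀ x : ℝ, B ≤ x →
            ∃ y ∈ Set.Icc (x - x ^ (-(σ/2))) (x + x ^ (-(σ/2))),
              Real.log y ∉ Submodule.span ℚ (Set.range fun n => Real.log (ρ n)) ∧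
              ∀ j n m : ℕ,
                |y ^ (j + 1) - ν n / ν m| > ν n ^ (-(3*σ)) * ν m ^ (-(3*σ)) := by
  refine ⟨2, le_rfl, 100, by norm_num, fun ρ ν hρ _ hν σ hσ hsum hprod x hx => ?_⟩
  have hleast := isLeast_one_beurlingIntegers fun i => (hρ.one_lt i).le
  have hν1 : ∀ n, 1 ≤ ν n := fun n => hleast.2 (hν.2.2.1 n)
  exact exists_mem_Icc_log_notMem_and_abs_pow_succ_sub_div_gt hν1 hσ
    (hsum.rpow_neg_of_le hν1 (by linarith))
    (tsum_rpow_neg_le_two (hν.apply_zero_eq hleast) hν1 (by linarith) hsum hprod)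
    (Submodule.countable_span_range _) hx

/-- Existence of a good perturbed prime near any large `x`: for `ε ∈ (0,1)` there are
`σ₀, B ≥ 2` such that for any Beurling system with `ρ_1 > 1 + ε` and any `σ ≥ σ₀` with
`(∑_{n≥2} ν_n^{-σ})(∑_{n≥1} ν_n^{-σ/4}) ≤ 1`, every `x ≥ B` admits
`y ∈ [x - x^{-σ/2}, x + x^{-σ/2}]` which is multiplicatively independent of the system
and whose powers avoid all ratios `ν_n/ν_m` by `ν_n^{-3σ} ν_m^{-3σ}`. -/
theorem exists_good_prime_in_interval (ε : ℝ) (hε : ε ∈ Set.Ioo (0:ℝ) 1) :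
    ∃ σ₀ : ℝ, 2 ≤ σ₀ ∧ ∃ B : ℝ, 2 ≤ B ∧
      ∀ ρ ν : ℕ → ℝ, IsBeurlingPrimes ρ → 1 + ε < ρ 0 →
        IsEnumeration ν (beurlingIntegers ρ) →
        ∀ σ : ℝ, σ₀ ≤ σ → (Summable fun n => ν n ^ (-(σ/4))) →
          (∑' n : ℕ, ν (n+1) ^ (-σ)) * (∑' n : ℕ, ν n ^ (-(σ/4))) ≤ 1 →
          ∀ x : ℝ, B ≤ x →
            ∃ y ∈ Set.Icc (x - x ^ (-(σ/2))) (x + x ^ (-(σ/2))),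
              Real.log y ∉ Submodule.span ℚ (Set.range fun n => Real.log (ρ n)) ∧
              ∀ j n m : ℕ,
                |y ^ (j + 1) - ν n / ν m| > ν n ^ (-(3*σ)) * ν m ^ (-(3*σ)) :=
  exists_good_prime_in_interval_general ε
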